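/- A finite poset P admits a labeling ε: E(P) → {-1,1} making P ε-graded if and only if P is parity graded, i.e., all maximal chains of P have cardinality of the same parity. Moreover, in that case ε can be chosen so that the rank function takes values in {0,1}. -/

import Mathlib

open Polynomial

variable {P : Type*}

/-- The ε-weight of a chain `x₀ ⋖ x₁ ⋖ ⋯ ⋖ xₙ`, recorded as a list:
the sum `Σ ε(x_{i-1}, x_i)` over consecutive pairs. -/
def chainWeight (ε : P → P → ℤ) (c : List P) : ℤ :=
  ((c.zip c.tail).map fun q => ε q.1 q.2).sum

/-- A (nonempty) saturated chain of the poset `P`, as a list of elements with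
each member covered by the next. -/
def IsSatChain [PartialOrder P] (c : List P) : Prop :=
  c ≠ [] ∧ c.Chain' (· ⋖ ·)

/-- A maximal chain: a saturated chain starting at a minimal element and
ending at a maximal element. -/
def IsMaxChainL [PartialOrder P] (c : List P) : Prop :=
  IsSatChain c ∧ (∀ x ∈ c.head?, IsMin x) ∧ (∀ x ∈ c.getLast?, IsMax x)

/-- A saturated chain starting at a minimal element of `P` and ending at `x`. -/
def IsSatChainFromMinTo [PartialOrder P] (x : P) (c : List P) : Prop :=
  IsSatChain c ∧ (∀ y ∈ c.head?, IsMin y) ∧ c.getLast? = some x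

/-- `ε` takes only the values `1` and `-1` on covering relations. -/
def IsSignLabeling [PartialOrder P] (ε : P → P → ℤ) : Prop :=
  ∀ x y : P, x ⋖ y → ε x y = 1 ∨ ε x y = -1

/-- `P` is `ε`-graded of rank `r`: every maximal chain has ε-weight `r`. -/
def IsEGraded [PartialOrder P] (ε : P → P → ℤ) (r : ℤ) : Prop :=
  ∀ c : List P, IsMaxChainL c → chainWeight ε c = r

/-- A `(P,ε)`-partition: an order-reversing map `σ : P → {1,2,…}` which is
strict on covering relations labeled `-1`. -/
def IsPPartition [PartialOrder P] (ε : P → P → ℤ) (σ : P → ℤ) : Prop :=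
  (∀ x, 1 ≤ σ x) ∧ (∀ x y : P, x ≤ y → σ y ≤ σ x) ∧
  (∀ x y : P, x ⋖ y → ε x y = -1 → σ y < σ x)

/-- `Ω(P,ε;n)`: the number of `(P,ε)`-partitions with largest part at most `n`. -/
noncomputable def OmegaCount [PartialOrder P] (ε : P → P → ℤ) (n : ℕ) : ℕ :=
  Nat.card {σ : P → ℤ // IsPPartition ε σ ∧ ∀ x, σ x ≤ (n : ℤ)}

/-- `P` is parity graded: all maximal chains have cardinality of the same parity. -/
def ParityGraded (P : Type*) [PartialOrder P] : Prop :=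
  ∀ c c' : List P, IsMaxChainL c → IsMaxChainL c' → c.length % 2 = c'.length % 2

/-!
Every covering step changes the length of a chain by one and its ε-weight by `±1`, so the
ε-weight of a saturated chain has the parity of its length minus one. Hence a constant
ε-weight on maximal chains forces parity gradedness. Conversely, in a parity graded poset all
saturated chains from a minimal element to `x` (completed by a common upward chain to maximal
chains) have the same length parity, which defines a rank `ρ x ∈ {0, 1}`; the labeling
`ε(x, y) = ρ y - ρ x` is then `±1` on covers, and the ε-weight of a chain telescopes to the
rank of its top element.
-/

section Weight

theorem chainWeight_cons_cons (ε : P → P → ℤ) (a b : P) (l : List P) :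
    chainWeight ε (a :: b :: l) = ε a b + chainWeight ε (b :: l) := by
  simp [chainWeight]

theorem chainWeight_sub (f : P → ℤ) :
    ∀ (c : List P) (hc : c ≠ []),
      chainWeight (fun a b => f b - f a) c = f (c.getLast hc) - f (c.head hc)
  | [a], _ => by simp [chainWeight]
  | a :: b :: l, _ => by
    rw [chainWeight_cons_cons, chainWeight_sub f (b :: l) (List.cons_ne_nil _ _),
      List.getLast_cons_cons, List.head_cons, List.head_cons]
    ring

variable [PartialOrder P]

theorem IsSatChain.chainWeight_modEq {ε : P → P → ℤ} (hε : IsSignLabeling ε) :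
    ∀ {c : List P}, IsSatChain c → chainWeight ε c ≡ c.length - 1 [ZMOD 2]
  | [a], _ => by simp [chainWeight, Int.ModEq]
  | a :: b :: l, ⟨_, hc⟩ => by
    have hab := hε a b (List.isChain_cons_cons.mp hc).1
    have ih : chainWeight ε (b :: l) ≡ l.length [ZMOD 2] := by
      simpa using IsSatChain.chainWeight_modEq hε ⟨List.cons_ne_nil _ _, hc.tail⟩
    rw [chainWeight_cons_cons]
    simp only [Int.ModEq, List.length_cons] at ih ⊢
    push_cast
    rcases hab with hab | hab <;> omega

theorem parityGraded_of_isEGraded {ε : P → P → ℤ} {r : ℤ} (hε : IsSignLabeling ε)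
    (hr : IsEGraded ε r) : ParityGraded P := by
  intro c c' hc hc'
  have h := hc.1.chainWeight_modEq hε
  have h' := hc'.1.chainWeight_modEq hε
  rw [hr c hc] at h
  rw [hr c' hc'] at h'
  simp only [Int.ModEq] at h h'
  omega

theorem exists_isEGraded_of_forall_eq {ε : P → P → ℤ}
    (h : ∀ c c' : List P, IsMaxChainL c → IsMaxChainL c' →
      chainWeight ε c = chainWeight ε c') :
    ∃ r, IsEGraded ε r := by
  by_cases hex : ∃ c₀ : List P, IsMaxChainL c₀
  · obtain ⟨c₀, hc₀⟩ := hex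
    exact ⟨chainWeight ε c₀, fun c hc => h c c₀ hc hc₀⟩
  · exact ⟨0, fun c hc => (hex ⟨c, hc⟩).elim⟩

end Weight

section Chains

variable [PartialOrder P]

theorem IsSatChainFromMinTo.append_singleton {x y : P} {c : List P}
    (hc : IsSatChainFromMinTo x c) (hxy : x ⋖ y) : IsSatChainFromMinTo y (c ++ [y]) := by
  obtain ⟨⟨hne, hchain⟩, hmin, hlast⟩ := hc
  refine ⟨⟨by simp, hchain.append (List.isChain_singleton y) ?_⟩, ?_, by simp⟩
  · simp [hlast, hxy]
  · rwa [List.head?_append_of_ne_nil _ hne]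

theorem IsSatChainFromMinTo.isMaxChainL {x : P} {c : List P} (hc : IsSatChainFromMinTo x c)
    (hx : IsMax x) : IsMaxChainL c :=
  ⟨hc.1, hc.2.1, by simp [hc.2.2, hx]⟩

theorem IsMaxChainL.isSatChainFromMinTo {c : List P} (hc : IsMaxChainL c) :
    IsSatChainFromMinTo (c.getLast hc.1.1) c :=
  ⟨hc.1, hc.2.1, List.getLast?_eq_getLast_of_ne_nil hc.1.1⟩

variable [WellFoundedLT P] [WellFoundedGT P]

theorem exists_isSatChainFromMinTo (x : P) : ∃ c : List P, IsSatChainFromMinTo x c := by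
  induction x using WellFoundedLT.induction with
  | _ x ih =>
    by_cases hx : IsMin x
    · exact ⟨[x], ⟨by simp, List.isChain_singleton x⟩, by simpa using hx, rfl⟩
    · obtain ⟨y, hyx⟩ := exists_covBy_of_wellFoundedGT hx
      obtain ⟨c, hc⟩ := ih y hyx.lt
      exact ⟨c ++ [x], hc.append_singleton hyx⟩

theorem exists_append_isMaxChainL (x : P) :
    ∃ d : List P, ∀ c : List P, IsSatChainFromMinTo x c → IsMaxChainL (c ++ d) := by
  induction x using WellFoundedGT.induction with
  | _ x ih =>
    by_cases hx : IsMax x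
    · exact ⟨[], fun c hc => by simpa using hc.isMaxChainL hx⟩
    · obtain ⟨y, hxy⟩ := exists_covBy_of_wellFoundedLT hx
      obtain ⟨d, hd⟩ := ih y hxy.lt
      exact ⟨y :: d, fun c hc => by simpa using hd _ (hc.append_singleton hxy)⟩

theorem ParityGraded.length_emod_two_eq (hP : ParityGraded P) {x : P} {c c' : List P}
    (hc : IsSatChainFromMinTo x c) (hc' : IsSatChainFromMinTo x c') :
    c.length % 2 = c'.length % 2 := by
  obtain ⟨d, hd⟩ := exists_append_isMaxChainL x
  have h := hP _ _ (hd c hc) (hd c' hc')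
  simp only [List.length_append] at h
  omega

end Chains

section ParityRank

variable [PartialOrder P] [WellFoundedLT P] [WellFoundedGT P]

/-- Read off an arbitrarily chosen chain; independent of that choice only when `P` is parity
graded (`ParityGraded.parityRank_eq`). -/
noncomputable def parityRank (x : P) : ℤ :=
  (((exists_isSatChainFromMinTo x).choose.length : ℤ) - 1) % 2

noncomputable def parityLabel (x y : P) : ℤ :=
  parityRank y - parityRank x

theorem ParityGraded.parityRank_eq (hP : ParityGraded P) {x : P} {c : List P}
    (hc : IsSatChainFromMinTo x c) : parityRank x = ((c.length : ℤ) - 1) % 2 := by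
  have h := hP.length_emod_two_eq hc (exists_isSatChainFromMinTo x).choose_spec
  rw [parityRank]
  omega

theorem ParityGraded.chainWeight_parityLabel (hP : ParityGraded P) {x : P} {c : List P}
    (hc : IsSatChainFromMinTo x c) : chainWeight parityLabel c = parityRank x := by
  obtain ⟨⟨hne, -⟩, hmin, hlast⟩ := hc
  have hhead : IsMin (c.head hne) := hmin _ (List.head?_eq_some_head hne)
  have hrank_head : parityRank (c.head hne) = 0 :=
    hP.parityRank_eq ⟨⟨List.cons_ne_nil _ _, List.isChain_singleton _⟩,
      fun y hy => Option.some.inj hy ▸ hhead, rfl⟩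
  have hx : c.getLast hne = x :=
    Option.some.inj ((List.getLast?_eq_getLast_of_ne_nil hne).symm.trans hlast)
  exact (chainWeight_sub parityRank c hne).trans (by rw [hrank_head, hx, sub_zero])

theorem ParityGraded.isSignLabeling_parityLabel (hP : ParityGraded P) :
    IsSignLabeling (parityLabel (P := P)) := by
  intro x y hxy
  obtain ⟨c, hc⟩ := exists_isSatChainFromMinTo x
  have hx := hP.parityRank_eq hc
  have hy := hP.parityRank_eq (hc.append_singleton hxy)
  simp only [List.length_append, List.length_singleton] at hy
  rw [parityLabel]
  omega

theorem ParityGraded.exists_isEGraded_parityLabel (hP : ParityGraded P) :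
    ∃ r, IsEGraded (parityLabel (P := P)) r := by
  refine exists_isEGraded_of_forall_eq fun c c' hc hc' => ?_
  rw [hP.chainWeight_parityLabel hc.isSatChainFromMinTo,
    hP.chainWeight_parityLabel hc'.isSatChainFromMinTo,
    hP.parityRank_eq hc.isSatChainFromMinTo, hP.parityRank_eq hc'.isSatChainFromMinTo]
  have h := hP c c' hc hc'
  omega

end ParityRank

theorem egraded_iff_parity_graded_general (P : Type*) [PartialOrder P] [Fintype P] :
    ((∃ ε : P → P → ℤ, IsSignLabeling ε ∧ ∃ r : ℤ, IsEGraded ε r) ↔ ParityGraded P) ∧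
    (ParityGraded P → ∃ ε : P → P → ℤ, IsSignLabeling ε ∧ (∃ r : ℤ, IsEGraded ε r) ∧
      ∀ x : P, ∀ c c' : List P, IsSatChainFromMinTo x c → IsSatChainFromMinTo x c' →
        chainWeight ε c = chainWeight ε c' ∧
        (chainWeight ε c = 0 ∨ chainWeight ε c = 1)) := by
  refine ⟨⟨fun ⟨ε, hε, r, hr⟩ => parityGraded_of_isEGraded hε hr, fun hP =>
    ⟨parityLabel, hP.isSignLabeling_parityLabel, hP.exists_isEGraded_parityLabel⟩⟩, fun hP =>
    ⟨parityLabel, hP.isSignLabeling_parityLabel, hP.exists_isEGraded_parityLabel,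
      fun x c c' hc hc' => ?_⟩⟩
  rw [hP.chainWeight_parityLabel hc, hP.chainWeight_parityLabel hc']
  exact ⟨rfl, Int.emod_two_eq_zero_or_one _⟩

/-- a finite poset `P` admits a labeling `ε : E(P) → {-1,1}`
making `P` `ε`-graded if and only if `P` is parity graded; moreover, in that
case `ε` can be chosen such that the rank function (the common ε-weight of
saturated chains from a minimal element to `x`) takes values in `{0,1}`. -/
theorem egraded_iff_parity_graded (P : Type*) [PartialOrder P] [Fintype P] [Nonempty P] :
    ((∃ ε : P → P → ℤ, IsSignLabeling ε ∧ ∃ r : ℤ, IsEGraded ε r) ↔ ParityGraded P) ∧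
    (ParityGraded P → ∃ ε : P → P → ℤ, IsSignLabeling ε ∧ (∃ r : ℤ, IsEGraded ε r) ∧
      ∀ x : P, ∀ c c' : List P, IsSatChainFromMinTo x c → IsSatChainFromMinTo x c' →
        chainWeight ε c = chainWeight ε c' ∧
        (chainWeight ε c = 0 ∨ chainWeight ε c = 1)) :=
  egraded_iff_parity_graded_general P
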